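/- arXiv:1206.6982 — 8 statements merged into one kernel-verified Lean document; each statement's English description precedes it below -/
import Mathlib

section
/- Let h ≥ 1, let the alphabet be the set of bit-vectors of length h (so σ = 2^h), and let S be a string of length n over this alphabet. For each bit-string v of length ℓ < h (a wavelet tree node), let S(v) be the subsequence of S consisting of those symbols whose first ℓ bits equal v, and let B(v) be the binary string obtained by mapping each symbol of S(v) to its (ℓ+1)-st bit. Then Σ_{v : |v| < h} |B(v)|·H_0(B(v)) = n·H_0(S) (terms with |B(v)| = 0 contribute 0). That is, the bitmaps of a balanced binary wavelet tree occupy, when zero-order compressed, exactly n·H_0(S) bits in total. -/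
/-- Zero-order empirical entropy of a string `S` over a finite alphabet `α`. -/
noncomputable def H0 {α : Type*} [Fintype α] [DecidableEq α] (S : List α) : ℝ :=
  ∑ a : α, if 0 < S.count a then
    ((S.count a : ℝ) / (S.length : ℝ)) * Real.logb 2 ((S.length : ℝ) / (S.count a : ℝ))
  else 0

/-- The bitmap `B(v)` of the wavelet tree node labelled by the bit-string
`v : Fin ℓ → Bool` (with `ℓ = (lev : Fin h).val < h`): take the subsequence of
symbols whose first `ℓ` bits equal `v` and record their `(ℓ+1)`-st bit. -/
def wtBitmap {h : ℕ} (S : List (Fin h → Bool)) (lev : Fin h)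
    (v : Fin (lev : ℕ) → Bool) : List Bool :=
  (S.filter (fun x => decide (∀ i : Fin (lev : ℕ), x (Fin.castLE lev.isLt.le i) = v i))).map
    (fun x => x lev)

noncomputable def flog (x : ℝ) : ℝ := x * Real.logb 2 x

lemma sum_count_univ {α : Type*} [Fintype α] [DecidableEq α] (S : List α) :
    ∑ a : α, S.count a = S.length := by
  classical
  have := Multiset.sum_count_eq_card (s := Finset.univ) (m := (S : Multiset α))
    (fun a _ => Finset.mem_univ a)
  simpa using this

lemma entropy_eq {α : Type*} [Fintype α] [DecidableEq α] (S : List α) :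
    (S.length : ℝ) * H0 S = flog S.length - ∑ a : α, flog (S.count a) := by
  classical
  rcases Nat.eq_zero_or_pos S.length with h0 | hpos
  · have : S = [] := List.length_eq_zero_iff.mp h0
    subst this
    simp [H0, flog]
  · have hn : (S.length : ℝ) ≠ 0 := by positivity
    rw [H0, Finset.mul_sum]
    have : ∀ a : α, (S.length : ℝ) * (if 0 < S.count a then
        ((S.count a : ℝ) / (S.length : ℝ)) * Real.logb 2 ((S.length : ℝ) / (S.count a : ℝ))
        else 0) = (S.count a : ℝ) * Real.logb 2 S.length - flog (S.count a) := by
      intro a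
      by_cases hc : 0 < S.count a
      · have hc' : (S.count a : ℝ) ≠ 0 := by positivity
        rw [if_pos hc, Real.logb_div hn hc', flog]
        field_simp
      · rw [if_neg hc]
        have : S.count a = 0 := by omega
        simp [this, flog]
    rw [Finset.sum_congr rfl (fun a _ => this a), Finset.sum_sub_distrib,
      ← Finset.sum_mul, ← Nat.cast_sum, sum_count_univ, flog]

/-- count at level ℓ -/
def cntL {h : ℕ} (S : List (Fin h → Bool)) (ℓ : ℕ) (hl : ℓ ≤ h) (v : Fin ℓ → Bool) : ℕ :=
  (S.filter fun x => decide (∀ i : Fin ℓ, x (Fin.castLE hl i) = v i)).length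

lemma wtBitmap_length {h : ℕ} (S : List (Fin h → Bool)) (lev : Fin h)
    (v : Fin (lev : ℕ) → Bool) :
    (wtBitmap S lev v).length = cntL S lev.val lev.isLt.le v := by
  simp [wtBitmap, cntL]

lemma wtBitmap_count {h : ℕ} (S : List (Fin h → Bool)) (lev : Fin h)
    (v : Fin (lev : ℕ) → Bool) (b : Bool) :
    (wtBitmap S lev v).count b = cntL S (lev.val + 1) lev.isLt (Fin.snoc v b) := by
  rw [wtBitmap, cntL, ← List.countP_eq_length_filter, List.count_eq_countP,
    List.countP_map, List.countP_filter]
  apply List.countP_congr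
  intro x _
  simp only [Function.comp, Bool.and_eq_true, beq_iff_eq, decide_eq_true_eq]
  constructor
  · rintro ⟨hb, hp⟩
    intro i
    refine Fin.lastCases ?_ ?_ i
    · have : Fin.castLE lev.isLt (Fin.last lev.val) = lev := by
        ext; simp
      rw [this, Fin.snoc_last]; exact hb
    · intro j
      have : Fin.castLE lev.isLt (Fin.castSucc j) = Fin.castLE lev.isLt.le j := by
        ext; simp
      rw [this, Fin.snoc_castSucc]; exact hp j
  · intro hp
    constructor
    · have := hp (Fin.last lev.val)
      have h1 : Fin.castLE lev.isLt (Fin.last lev.val) = lev := by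
        ext; simp
      rwa [h1, Fin.snoc_last] at this
    · intro j
      have := hp (Fin.castSucc j)
      have h1 : Fin.castLE lev.isLt (Fin.castSucc j) = Fin.castLE lev.isLt.le j := by
        ext; simp
      rwa [h1, Fin.snoc_castSucc] at this


/-- The bitmaps of a balanced binary wavelet tree over the alphabet `{0,1}^h`,
when zero-order compressed, occupy exactly `n·H₀(S)` bits in total:
`∑_{v : |v| < h} |B(v)|·H₀(B(v)) = n·H₀(S)`. -/
theorem stmt2 {h : ℕ} (hh : 1 ≤ h) (S : List (Fin h → Bool)) :
    ∑ lev : Fin h, ∑ v : Fin (lev : ℕ) → Bool,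
      ((wtBitmap S lev v).length : ℝ) * H0 (wtBitmap S lev v) =
      (S.length : ℝ) * H0 S := by
  classical
  set G : ℕ → ℝ := fun ℓ =>
    if hl : ℓ ≤ h then ∑ v : Fin ℓ → Bool, flog (cntL S ℓ hl v) else 0 with hGdef
  have hstep : ∀ lev : Fin h,
      ∑ v : Fin (lev : ℕ) → Bool,
        ((wtBitmap S lev v).length : ℝ) * H0 (wtBitmap S lev v)
      = G lev.val - G (lev.val + 1) := by
    intro lev
    have h1 : (lev.val : ℕ) ≤ h := lev.isLt.le
    have h2 : lev.val + 1 ≤ h := lev.isLt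
    rw [hGdef]
    simp only [dif_pos h1, dif_pos h2]
    have key : ∀ v : Fin (lev : ℕ) → Bool,
        ((wtBitmap S lev v).length : ℝ) * H0 (wtBitmap S lev v)
        = flog (cntL S lev.val h1 v)
          - (flog (cntL S (lev.val + 1) h2 (Fin.snoc v false))
             + flog (cntL S (lev.val + 1) h2 (Fin.snoc v true))) := by
      intro v
      rw [entropy_eq (wtBitmap S lev v), wtBitmap_length]
      have : ∑ b : Bool, flog (((wtBitmap S lev v).count b : ℕ) : ℝ)
          = flog (cntL S (lev.val + 1) h2 (Fin.snoc v false))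
            + flog (cntL S (lev.val + 1) h2 (Fin.snoc v true)) := by
        rw [Fintype.sum_bool, wtBitmap_count, wtBitmap_count]
        ring
      rw [this]
    rw [Finset.sum_congr rfl (fun v _ => key v), Finset.sum_sub_distrib]
    congr 1
    have hsplit := Fintype.sum_equiv (Fin.snocEquiv (fun _ : Fin (lev.val + 1) => Bool))
      (fun x : Bool × (Fin (lev : ℕ) → Bool) =>
        flog (cntL S (lev.val + 1) h2 (Fin.snoc x.2 x.1)))
      (fun w : Fin (lev.val + 1) → Bool => flog (cntL S (lev.val + 1) h2 w))
      (fun x => rfl)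
    rw [← hsplit, Fintype.sum_prod_type, Fintype.sum_bool, ← Finset.sum_add_distrib]
    exact Finset.sum_congr rfl (fun v _ => by rw [add_comm])
  rw [Finset.sum_congr rfl (fun lev _ => hstep lev)]
  have := Fin.sum_univ_eq_sum_range (fun ℓ => G ℓ - G (ℓ + 1)) h
  rw [this, Finset.sum_range_sub' G h]
  have hG0 : G 0 = flog S.length := by
    rw [hGdef]
    simp only [dif_pos (Nat.zero_le h)]
    rw [Fintype.sum_unique]
    congr 1
    rw [cntL]
    simp
  have hGh : G h = ∑ a : Fin h → Bool, flog (S.count a) := by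
    rw [hGdef]
    simp only [dif_pos (le_refl h)]
    apply Finset.sum_congr rfl
    intro v _
    have : cntL S h (le_refl h) v = S.count v := by
      rw [cntL, ← List.countP_eq_length_filter, List.count_eq_countP]
      apply List.countP_congr
      intro x _
      simp only [beq_iff_eq, decide_eq_true_eq]
      constructor
      · intro hp; funext i; exact hp i
      · intro hx i; subst hx; rfl
    rw [this]
  rw [hG0, hGh, entropy_eq]
end

section
/- Let S be a string over a finite alphabet Σ, c : Σ → {1,…,ρ} a classification map, B = map c S, and for each class t let S_t = filter (fun a => c a = t) S. Then for every position i < |S|, letting t = c(S[i]), one has S_t[rank_t(B, i)] = S[i]. That is, one step of wavelet tree descent (reading t = B[i] and moving to position rank_t(B,i) in the child sequence) correctly tracks the symbol, so access queries are correctly answered by the wavelet tree. -/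
/-- `rank a S i` = number of occurrences of symbol `a` among the first `i`
symbols `S[0..i-1]`. -/
def rank {α : Type*} [DecidableEq α] (a : α) (S : List α) (i : ℕ) : ℕ :=
  (S.take i).count a

lemma stmt3_aux {α : Type*} [DecidableEq α] {ρ : ℕ} (c : α → Fin ρ) :
    ∀ (S : List α) (t : Fin ρ) (i : ℕ) (hi : i < S.length), c S[i] = t →
    (S.filter (fun a => decide (c a = t)))[rank t (S.map c) i]? = some S[i] := by
  intro S
  induction S with
  | nil => intro t i hi; simp at hi
  | cons a S ih =>
    intro t i hi ht
    cases i with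
    | zero =>
      simp only [List.getElem_cons_zero] at ht ⊢
      simp [rank, List.filter_cons, ht]
    | succ n =>
      simp only [List.getElem_cons_succ] at ht ⊢
      have hn : n < S.length := by simpa using hi
      have key := ih t n hn ht
      simp only [rank, List.map_cons, List.take_succ_cons, List.count_cons,
        List.filter_cons] at *
      by_cases h : c a = t
      · simp [h, key, rank] at *
      · simp [h, key, rank] at *

/-- Correctness of one step of wavelet tree descent for access queries:
with `B = map c S` and `S_t = filter (c · = t) S`, for every position
`i < |S|`, letting `t = c (S[i])`, we have `S_t[rank_t(B, i)] = S[i]`. -/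
theorem stmt3 {α : Type*} [DecidableEq α] {ρ : ℕ}
    (S : List α) (c : α → Fin ρ) (i : ℕ) (hi : i < S.length) :
    (S.filter (fun a => decide (c a = c S[i])))[rank (c S[i]) (S.map c) i]? =
      some S[i] := by
  exact stmt3_aux c S (c S[i]) i hi rfl
end

section
/- Let S be a string over a finite alphabet Σ, c : Σ → {1,…,ρ} a classification map, B = map c S, and for each class t let S_t = filter (fun a => c a = t) S. Then for every symbol a ∈ Σ with c(a) = t and every 0 ≤ i ≤ |S|, rank_a(S, i) = rank_a(S_t, rank_t(B, i)). That is, a rank query on S reduces to a rank query on the child sequence at position rank_t(B,i), which is the correctness of rank on wavelet trees. -/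
lemma take_filter_aux {α : Type*} {ρ : ℕ} (c : α → Fin ρ) (t : Fin ρ) :
    ∀ (S : List α) (i : ℕ),
    (S.take i).filter (fun x => decide (c x = t)) =
      (S.filter (fun x => decide (c x = t))).take (((S.map c).take i).count t) := by
  intro S
  induction S with
  | nil => intro i; simp
  | cons x xs ih =>
    intro i
    cases i with
    | zero => simp
    | succ n =>
      by_cases h : c x = t
      · simp [List.filter_cons, h, List.count_cons, ih n]
      · simp [List.filter_cons, h, List.count_cons, ih n]

/-- Correctness of rank on wavelet trees: with `B = map c S` and
`S_t = filter (c · = t) S`, for every symbol `a` with `c a = t` and every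
`0 ≤ i ≤ |S|`, `rank_a(S, i) = rank_a(S_t, rank_t(B, i))`. -/
theorem stmt4 {α : Type*} [DecidableEq α] {ρ : ℕ}
    (S : List α) (c : α → Fin ρ) (a : α) (t : Fin ρ) (hat : c a = t)
    (i : ℕ) (hi : i ≤ S.length) :
    rank a S i =
      rank a (S.filter (fun x => decide (c x = t))) (rank t (S.map c) i) := by
  unfold rank
  rw [← take_filter_aux c t S i, List.count_filter (by simp [hat])]
end

section
/- Let S be a string over a finite alphabet Σ, c : Σ → {1,…,ρ} a classification map, B = map c S, and for each class t let S_t = filter (fun a => c a = t) S. Then for every symbol a ∈ Σ with c(a) = t and every 1 ≤ j ≤ (number of occurrences of a in S), select_a(S, j) = select_t(B, select_a(S_t, j) + 1). That is, a select query on S is answered by first selecting within the child sequence and then mapping the resulting occurrence upward through B, which is the correctness of select on wavelet trees. -/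
def pos {α : Type*} [DecidableEq α] (a : α) (S : List α) : List ℕ :=
  (List.range S.length).filter (fun e => decide (S[e]? = some a))

lemma pos_cons {α : Type*} [DecidableEq α] (a x : α) (S : List α) :
    pos a (x :: S) = (if x = a then [0] else []) ++ (pos a S).map (· + 1) := by
  unfold pos
  rw [List.length_cons, List.range_succ_eq_map, List.filter_cons]
  simp only [List.getElem?_cons_zero, List.getElem?_cons_succ, List.filter_map]
  by_cases h : x = a <;> simp [h, Function.comp_def, Nat.succ_eq_add_one]

lemma pos_length {α : Type*} [DecidableEq α] (a : α) (S : List α) :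
    (pos a S).length = S.count a := by
  induction S with
  | nil => simp [pos]
  | cons x S ih =>
      rw [pos_cons]
      by_cases h : x = a <;> simp [h, List.count_cons, ih]

lemma pos_mem_lt {α : Type*} [DecidableEq α] {a : α} {S : List α} {k : ℕ}
    (hk : k ∈ pos a S) : k < S.length :=
  List.mem_range.mp (List.mem_filter.mp hk).1

lemma getD_map_lt (l : List ℕ) (f : ℕ → ℕ) (i d : ℕ) (h : i < l.length) :
    (l.map f).getD i d = f (l.getD i d) := by
  rw [List.getD_eq_getElem _ _ (by simpa using h), List.getD_eq_getElem _ _ h, List.getElem_map]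

lemma getD_mem (l : List ℕ) (i d : ℕ) (h : i < l.length) : l.getD i d ∈ l := by
  rw [List.getD_eq_getElem _ _ h]; exact List.getElem_mem h

lemma posQ_len {α : Type*} [DecidableEq α] {ρ : ℕ} (c : α → Fin ρ) (t : Fin ρ) (S : List α) :
    (pos t (S.map c)).length = (S.filter (fun x => decide (c x = t))).length := by
  rw [pos_length]
  simp only [List.count, List.countP_map, Function.comp_def, List.countP_eq_length_filter,
    List.filter_map, List.length_map]
  congr 1

lemma key {α : Type*} [DecidableEq α] {ρ : ℕ}
    (c : α → Fin ρ) (a : α) (t : Fin ρ) (hat : c a = t) :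
    ∀ (S : List α) (j : ℕ), 1 ≤ j → j ≤ S.count a →
    (pos a S).getD (j - 1) 0 =
      (pos t (S.map c)).getD ((pos a (S.filter (fun x => decide (c x = t)))).getD (j - 1) 0) 0 := by
  intro S
  induction S with
  | nil => intro j h1 h2; simp at h2; omega
  | cons x S ih =>
      intro j h1 h2
      set St := S.filter (fun x => decide (c x = t)) with hSt
      have hcount_eq : St.count a = S.count a := by
        rw [hSt, List.count_filter (by simp [hat])]
      by_cases hx : x = a
      · subst hx
        have hct : c x = t := hat
        rw [List.map_cons, List.filter_cons_of_pos (by simp [hct]), pos_cons, pos_cons, pos_cons]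
        simp only [if_pos rfl, if_pos hct, eq_self_iff_true, if_true, ← hSt]
        rcases Nat.eq_or_lt_of_le h1 with h | h
        · simp [← h]
        · have hcS : j - 1 ≤ S.count x := by simp [List.count_cons] at h2; omega
          have hP : j - 2 < (pos x S).length := by rw [pos_length]; omega
          have hR : j - 2 < (pos x St).length := by rw [pos_length, hcount_eq]; omega
          have hQ : (pos x St).getD (j - 2) 0 < (pos t (S.map c)).length := by
            rw [posQ_len]
            exact pos_mem_lt (getD_mem _ _ _ hR)
          have e1 : j - 1 = (j - 2) + 1 := by omega
          rw [e1]
          simp only [List.singleton_append, List.getD_cons_succ]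
          rw [getD_map_lt _ _ _ _ hP, getD_map_lt _ _ _ _ hR, List.getD_cons_succ,
            getD_map_lt _ _ _ _ hQ]
          have hIH := ih (j - 1) (by omega) hcS
          rw [show j - 1 - 1 = j - 2 from by omega] at hIH
          rw [hIH]
      · have hcS : j ≤ S.count a := by simp [List.count_cons, hx] at h2; omega
        have hP : j - 1 < (pos a S).length := by rw [pos_length]; omega
        have hR : j - 1 < (pos a St).length := by rw [pos_length, hcount_eq]; omega
        have hQ : (pos a St).getD (j - 1) 0 < (pos t (S.map c)).length := by
          rw [posQ_len]
          exact pos_mem_lt (getD_mem _ _ _ hR)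
        have hIH := ih j h1 hcS
        by_cases hct : c x = t
        · rw [List.map_cons, List.filter_cons_of_pos (by simp [hct]), pos_cons, pos_cons, pos_cons]
          simp only [if_neg hx, if_pos hct, if_neg (fun h : x = a => hx h), List.nil_append,
            List.singleton_append]
          rw [getD_map_lt _ _ _ _ hP, getD_map_lt _ _ _ _ hR, List.getD_cons_succ,
            getD_map_lt _ _ _ _ hQ, hIH]
        · rw [List.map_cons, List.filter_cons_of_neg (by simp [hct]), pos_cons, pos_cons]
          simp only [if_neg hx, if_neg (fun h : (c x) = t => hct h), List.nil_append]
          rw [getD_map_lt _ _ _ _ hP, getD_map_lt _ _ _ _ hQ, hIH]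

/-- `select a S j` = 0-based position in `S` of the `j`-th occurrence
(`j ≥ 1`) of symbol `a`. -/
def select {α : Type*} [DecidableEq α] (a : α) (S : List α) (j : ℕ) : ℕ :=
  ((List.range S.length).filter (fun e => decide (S[e]? = some a))).getD (j - 1) 0

/-- Correctness of select on wavelet trees: with `B = map c S` and
`S_t = filter (c · = t) S`, for every symbol `a` with `c a = t` and every
`1 ≤ j ≤ (number of occurrences of a in S)`,
`select_a(S, j) = select_t(B, select_a(S_t, j) + 1)`. -/
theorem stmt5 {α : Type*} [DecidableEq α] {ρ : ℕ}
    (S : List α) (c : α → Fin ρ) (a : α) (t : Fin ρ) (hat : c a = t)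
    (j : ℕ) (hj1 : 1 ≤ j) (hj2 : j ≤ S.count a) :
    select a S j =
      select t (S.map c)
        (select a (S.filter (fun x => decide (c x = t))) j + 1) := by
  have h := key c a t hat S j hj1 hj2
  simpa [select, pos, Nat.add_sub_cancel] using h
end

section
/- Let S be a string of length n ≥ 1 and D a string of length d ≥ 1 over a common finite alphabet Σ, and let S̄ be any string of length n + d in which each symbol a occurs exactly (count of a in S) + (count of a in D) times. Then (n+d)·H_0(S̄) ≤ n·H_0(S) + d·H_0(D) + (n+d)·h₂(d/(n+d)), where h₂(x) = −x·log₂ x − (1−x)·log₂(1−x) is the binary entropy function. In particular, retaining d = O(n/log² n) lazily deleted symbols in a sequence increases the total zero-order entropy by only O(n/ log n) bits. -/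
/-- The binary entropy function `h₂(x) = −x·log₂ x − (1−x)·log₂(1−x)`
(with `h₂(0) = h₂(1) = 0`, which holds since `log 0 = 0` in Mathlib). -/
noncomputable def binEnt (x : ℝ) : ℝ :=
  -x * Real.logb 2 x - (1 - x) * Real.logb 2 (1 - x)

private lemma perSymbol {N s d : ℝ} (hN : 0 < N) (hs : 0 ≤ s) (hd : 0 ≤ d) :
    (s + d) * Real.logb 2 (N / (s + d)) ≤
      s * Real.logb 2 (N / s) + d * Real.logb 2 (N / d) := by
  rcases eq_or_lt_of_le hs with h | hs
  · simp [← h]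
  rcases eq_or_lt_of_le hd with h | hd
  · simp [← h]
  have hsd : 0 < s + d := by linarith
  rw [Real.logb_div hN.ne' hsd.ne', Real.logb_div hN.ne' hs.ne',
      Real.logb_div hN.ne' hd.ne']
  have h1 : s * Real.logb 2 s ≤ s * Real.logb 2 (s + d) :=
    mul_le_mul_of_nonneg_left
      (Real.logb_le_logb_of_le (by norm_num) hs (by linarith)) hs.le
  have h2 : d * Real.logb 2 d ≤ d * Real.logb 2 (s + d) :=
    mul_le_mul_of_nonneg_left
      (Real.logb_le_logb_of_le (by norm_num) hd (by linarith)) hd.le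
  nlinarith [h1, h2]

private lemma logbSplit {N n s : ℝ} (hN : 0 < N) (hn : 0 < n) (hs : 0 ≤ s) :
    s * Real.logb 2 (n / s) + s * Real.logb 2 (N / n) = s * Real.logb 2 (N / s) := by
  rcases eq_or_lt_of_le hs with h | hs
  · simp [← h]
  rw [← mul_add, ← Real.logb_mul (by positivity) (by positivity)]
  congr 2
  field_simp

private lemma sumCount {α : Type*} [Fintype α] [DecidableEq α] (l : List α) :
    ∑ a : α, l.count a = l.length := by
  simpa using Multiset.sum_count_eq_card (s := Finset.univ) (m := (l : Multiset α))
    (fun a _ => Finset.mem_univ a)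

private lemma mulH0 {α : Type*} [Fintype α] [DecidableEq α] (l : List α)
    (hl : 1 ≤ l.length) :
    (l.length : ℝ) *
        (∑ a : α, if 0 < l.count a then
          ((l.count a : ℝ) / (l.length : ℝ)) *
            Real.logb 2 ((l.length : ℝ) / (l.count a : ℝ)) else 0) =
      ∑ a : α, (l.count a : ℝ) * Real.logb 2 ((l.length : ℝ) / (l.count a : ℝ)) := by
  have hn : (0 : ℝ) < l.length := by exact_mod_cast hl
  rw [Finset.mul_sum]
  refine Finset.sum_congr rfl fun a _ => ?_
  split_ifs with h
  · field_simp
  · simp [Nat.eq_zero_of_not_pos h]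

/-- Interleaving a string `S` of length `n ≥ 1` with `d ≥ 1` lazily deleted
symbols `D`: if `S̄` has length `n + d` and each symbol occurs in `S̄` exactly
as often as in `S` and `D` together, then
`(n+d)·H₀(S̄) ≤ n·H₀(S) + d·H₀(D) + (n+d)·h₂(d/(n+d))`. -/
theorem stmt12 {α : Type*} [Fintype α] [DecidableEq α]
    (S D Sbar : List α) (hS : 1 ≤ S.length) (hD : 1 ≤ D.length)
    (hlen : Sbar.length = S.length + D.length)
    (hcount : ∀ a : α, Sbar.count a = S.count a + D.count a) :
    ((S.length + D.length : ℕ) : ℝ) * H0 Sbar ≤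
      (S.length : ℝ) * H0 S + (D.length : ℝ) * H0 D +
      ((S.length + D.length : ℕ) : ℝ) *
        binEnt ((D.length : ℝ) / ((S.length : ℝ) + (D.length : ℝ))) := by
  set n : ℝ := (S.length : ℝ) with hn_def
  set d : ℝ := (D.length : ℝ) with hd_def
  have hn : (0:ℝ) < n := by rw [hn_def]; exact_mod_cast hS
  have hd : (0:ℝ) < d := by rw [hd_def]; exact_mod_cast hD
  have hN : (0:ℝ) < n + d := by linarith
  have hcast : ((S.length + D.length : ℕ) : ℝ) = n + d := by
    rw [hn_def, hd_def]; push_cast; ring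
  rw [hcast]
  -- LHS as a sum
  have hL : (n + d) * H0 Sbar =
      ∑ a : α, ((S.count a : ℝ) + (D.count a : ℝ)) *
        Real.logb 2 ((n + d) / ((S.count a : ℝ) + (D.count a : ℝ))) := by
    have hmul := mulH0 (α := α) Sbar (by omega)
    have hlen' : (Sbar.length : ℝ) = n + d := by
      rw [hlen, hn_def, hd_def]; push_cast; ring
    rw [H0, ← hlen', hmul]
    refine Finset.sum_congr rfl fun a _ => ?_
    rw [hcount a]; push_cast; ring_nf
  rw [hL]
  -- binEnt expansion
  have hbe : (n + d) * binEnt (d / (n + d)) =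
      d * Real.logb 2 ((n + d) / d) + n * Real.logb 2 ((n + d) / n) := by
    rw [binEnt]
    have h1 : 1 - d / (n + d) = n / (n + d) := by field_simp; ring
    have h2 : Real.logb 2 (d / (n + d)) = - Real.logb 2 ((n + d) / d) := by
      rw [← Real.logb_inv, inv_div]
    have h3 : Real.logb 2 (n / (n + d)) = - Real.logb 2 ((n + d) / n) := by
      rw [← Real.logb_inv, inv_div]
    rw [h1, h2, h3]
    generalize Real.logb 2 ((n + d) / d) = L1
    generalize Real.logb 2 ((n + d) / n) = L2
    field_simp
    ring
  rw [H0, H0, mulH0 S hS, mulH0 D hD, hbe, ← hn_def, ← hd_def]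
  have e1 : d * Real.logb 2 ((n + d) / d) =
      ∑ a : α, (D.count a : ℝ) * Real.logb 2 ((n + d) / d) := by
    rw [← Finset.sum_mul]
    congr 1
    rw [hd_def]; exact_mod_cast (sumCount D).symm
  have e2 : n * Real.logb 2 ((n + d) / n) =
      ∑ a : α, (S.count a : ℝ) * Real.logb 2 ((n + d) / n) := by
    rw [← Finset.sum_mul]
    congr 1
    rw [hn_def]; exact_mod_cast (sumCount S).symm
  rw [e1, e2, ← Finset.sum_add_distrib, ← Finset.sum_add_distrib,
    ← Finset.sum_add_distrib]
  refine Finset.sum_le_sum fun a _ => ?_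
  have g1 := logbSplit hN hn (Nat.cast_nonneg (S.count a) : (0:ℝ) ≤ S.count a)
  have g2 := logbSplit hN hd (Nat.cast_nonneg (D.count a) : (0:ℝ) ≤ D.count a)
  have g3 := perSymbol (s := (S.count a : ℝ)) (d := (D.count a : ℝ)) hN
    (Nat.cast_nonneg _) (Nat.cast_nonneg _)
  linarith [g1, g2, g3]
end

section
/- Let R_1, …, R_n be finite lists (the lists of labels related to each of n objects), let S = R_1 ++ ⋯ ++ R_n be their concatenation, and let B be the bitmap formed by concatenating, for i = 1, …, n, |R_i| ones followed by a single zero. Then B contains exactly n zeros, and for every 1 ≤ o ≤ n: (a) the number of ones preceding the o-th zero of B equals Σ_{i=1}^{o} |R_i| (i.e., rank_1(B, select_0(B, o)) = Σ_{i≤o} |R_i|); and (b) for every 1 ≤ j ≤ |R_o|, the j-th element of R_o equals S[Σ_{i<o} |R_i| + j − 1]. Hence access/rank/select on S and B correctly answer the queries of the binary-relation representation. -/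
def selpos {α : Type*} [DecidableEq α] (a : α) (S : List α) : List ℕ :=
  (List.range S.length).filter (fun e => decide (S[e]? = some a))

lemma selpos_append {α : Type*} [DecidableEq α] (a : α) (X Y : List α) :
    selpos a (X ++ Y) = selpos a X ++ (selpos a Y).map (X.length + ·) := by
  unfold selpos
  rw [List.length_append, List.range_add, List.filter_append, List.filter_map]
  congr 1
  · apply List.filter_congr
    intro e he
    simp only [List.mem_range] at he
    rw [List.getElem?_append_left he]
  · congr 1
    apply List.filter_congr
    intro e he
    simp only [Function.comp]
    rw [List.getElem?_append_right (Nat.le_add_right _ _)]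
    simp

def blocks {α : Type*} (L : List (List α)) : List Bool :=
  (L.map fun r => List.replicate r.length true ++ [false]).flatten

def sumlen {α : Type*} (L : List (List α)) : ℕ := (L.map List.length).sum

lemma selpos_single : selpos false [false] = [0] := by decide

lemma selpos_replicate (k : ℕ) : selpos false (List.replicate k true) = [] := by
  unfold selpos
  rw [List.filter_eq_nil_iff]
  intro e he
  simp only [List.mem_range, List.length_replicate] at he
  simp [List.getElem?_replicate, he]

lemma selpos_blocks {α : Type*} (L : List (List α)) :
    selpos false (blocks L) =
      (List.range L.length).map (fun o => sumlen (L.take (o + 1)) + o) := by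
  induction L with
  | nil => simp [blocks, selpos]
  | cons r L ih =>
    have : blocks (r :: L) = (List.replicate r.length true ++ [false]) ++ blocks L := by
      simp [blocks]
    rw [this, selpos_append, selpos_append, selpos_replicate, selpos_single, ih,
      List.length_cons, List.range_succ_eq_map]
    simp only [List.map_map, List.map_cons, List.nil_append, List.map_nil]
    rw [List.cons_append, List.nil_append]
    congr 1
    · simp [sumlen]
    · refine List.map_congr_left (fun o ho => ?_)
      simp only [Function.comp_apply, sumlen, List.take_succ_cons, List.map_cons, List.sum_cons,
        List.length_append, List.length_replicate, List.length_singleton, Nat.succ_eq_add_one]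
      omega

lemma count_false_blocks {α : Type*} (L : List (List α)) :
    (blocks L).count false = L.length := by
  induction L with
  | nil => simp [blocks]
  | cons r L ih =>
    have : blocks (r :: L) = (List.replicate r.length true ++ [false]) ++ blocks L := by
      simp [blocks]
    rw [this]
    simp [List.count_append, ih, List.count_replicate]

lemma rank_blocks {α : Type*} (L : List (List α)) (o : ℕ) (h : o < L.length) :
    ((blocks L).take (sumlen (L.take (o + 1)) + o)).count true
      = sumlen (L.take (o + 1)) := by
  induction L generalizing o with
  | nil => simp at h
  | cons r L ih =>
    have hb : blocks (r :: L) = (List.replicate r.length true ++ [false]) ++ blocks L := by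
      simp [blocks]
    cases o with
    | zero =>
      rw [hb]
      have h1 : sumlen ((r :: L).take 1) = r.length := by simp [sumlen]
      rw [h1]
      rw [List.append_assoc, List.take_append_of_le_length (by simp)]
      simp
    | succ o =>
      have h1 : sumlen ((r :: L).take (o + 2)) + (o + 1)
          = (r.length + 1) + (sumlen (L.take (o + 1)) + o) := by
        simp [sumlen, List.take_succ_cons]; omega
      have h2 : r.length + 1 + (sumlen (L.take (o + 1)) + o)
          = (List.replicate r.length true ++ [false]).length + (sumlen (L.take (o + 1)) + o) := by
        simp
      rw [hb, h1, h2, List.take_length_add_append, List.count_append]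
      have h3 := ih o (by simpa using h)
      rw [h3]
      simp [sumlen, List.take_succ_cons, List.count_replicate]

lemma flatten_getElem? {α : Type*} (L : List (List α)) (o : ℕ) (h : o < L.length)
    (t : ℕ) (ht : t < (L[o]'h).length) :
    L.flatten[sumlen (L.take o) + t]? = (L[o]'h)[t]? := by
  induction L generalizing o with
  | nil => simp at h
  | cons r L ih =>
    cases o with
    | zero =>
      simp only [List.take_zero, sumlen, List.map_nil, List.sum_nil, Nat.zero_add,
        List.flatten_cons]
      rw [List.getElem?_append_left]
      · rfl
      · simpa using ht
    | succ o =>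
      have h1 : sumlen ((r :: L).take (o + 1)) = r.length + sumlen (L.take o) := by
        simp [sumlen, List.take_succ_cons]
      simp only [List.flatten_cons, h1]
      rw [Nat.add_assoc, List.getElem?_append_right (Nat.le_add_right _ _)]
      simp only [Nat.add_sub_cancel_left]
      exact ih o (by simpa using h) (by simpa using ht)

lemma sum_take_ofFn {α : Type*} {n : ℕ} (R : Fin n → List α) (m : ℕ) (hm : m ≤ n) :
    sumlen ((List.ofFn R).take m) =
      ∑ i : Fin n, if (i : ℕ) < m then (R i).length else 0 := by
  induction m with
  | zero => simp [sumlen]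
  | succ m ih =>
    have hm' : m < n := hm
    have h1 : (List.ofFn R).take (m + 1) = (List.ofFn R).take m ++ [R ⟨m, hm'⟩] := by
      rw [List.take_succ]
      congr 1
      simp [List.getElem?_ofFn, hm']
    have h2 : sumlen ((List.ofFn R).take m ++ [R ⟨m, hm'⟩])
        = sumlen ((List.ofFn R).take m) + (R ⟨m, hm'⟩).length := by
      simp [sumlen]
    rw [h1, h2, ih (Nat.le_of_lt hm')]
    have h3 : ∀ i : Fin n, (if (i : ℕ) < m + 1 then (R i).length else 0)
        = (if (i : ℕ) < m then (R i).length else 0)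
          + (if i = ⟨m, hm'⟩ then (R i).length else 0) := by
      intro i
      rcases lt_trichotomy (i : ℕ) m with h | h | h
      · simp [h, Nat.lt_succ_of_lt h, Fin.ext_iff, Nat.ne_of_lt h]
      · simp [h, Fin.ext_iff, Nat.lt_irrefl]
      · rw [if_neg (by omega), if_neg (by omega), if_neg (by simp [Fin.ext_iff]; omega)]
    simp only [h3, Finset.sum_add_distrib]
    rw [Finset.sum_ite_eq' Finset.univ (⟨m, hm'⟩ : Fin n) (fun i => (R i).length)]
    simp


/-- Correctness of the binary-relation representation: with `S = R₁ ++ ⋯ ++ Rₙ`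
and `B` the bitmap of `|Rᵢ|` ones followed by a zero, for each object:
`B` has `n` zeros; the number of ones preceding the `o`-th zero of `B`
(`rank₁(B, select₀(B, o))`) equals `∑_{i ≤ o} |Rᵢ|`; and the `j`-th element of
`R_o` equals `S[∑_{i < o} |Rᵢ| + j − 1]` for `1 ≤ j ≤ |R_o|`. -/
theorem stmt14 {α : Type*} [DecidableEq α] {n : ℕ} (R : Fin n → List α)
    (S : List α) (B : List Bool)
    (hS : S = (List.ofFn R).flatten)
    (hB : B = (List.ofFn (fun i => List.replicate (R i).length true ++ [false])).flatten) :
    B.count false = n ∧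
    (∀ o : Fin n,
      rank true B (select false B ((o : ℕ) + 1)) =
        ∑ i : Fin n, if (i : ℕ) ≤ (o : ℕ) then (R i).length else 0) ∧
    (∀ o : Fin n, ∀ j : ℕ, 1 ≤ j → j ≤ (R o).length →
      (R o)[j - 1]? =
        S[(∑ i : Fin n, if (i : ℕ) < (o : ℕ) then (R i).length else 0) + j - 1]?) := by
  have hBb : B = blocks (List.ofFn R) := by
    rw [hB, blocks, List.map_ofFn]
    rfl
  refine ⟨?_, ?_, ?_⟩
  · rw [hBb, count_false_blocks, List.length_ofFn]
  · intro o
    have ho : (o : ℕ) < (List.ofFn R).length := by simp [o.isLt]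
    have hsel : select false B ((o : ℕ) + 1)
        = sumlen ((List.ofFn R).take ((o : ℕ) + 1)) + (o : ℕ) := by
      rw [select, hBb]
      show (selpos false (blocks (List.ofFn R))).getD ((o : ℕ) + 1 - 1) 0 = _
      rw [selpos_blocks, Nat.add_sub_cancel, List.getD_eq_getElem?_getD,
        List.getElem?_map, List.getElem?_range (by simpa using o.isLt)]
      rfl
    rw [hsel, hBb, rank, rank_blocks _ _ ho, sum_take_ofFn R _ (by omega)]
    apply Finset.sum_congr rfl
    intro i _
    congr 1
    simp [Nat.lt_succ_iff]
  · intro o j hj1 hj2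
    obtain ⟨t, rfl⟩ : ∃ t, j = t + 1 := ⟨j - 1, by omega⟩
    have ho : (o : ℕ) < (List.ofFn R).length := by simp [o.isLt]
    have ht : t < ((List.ofFn R)[(o : ℕ)]'ho).length := by
      simpa using (by omega : t < (R o).length)
    have := flatten_getElem? (List.ofFn R) (o : ℕ) ho t ht
    rw [hS, ← sum_take_ofFn R (o : ℕ) (Nat.le_of_lt o.isLt)]
    have harith : sumlen ((List.ofFn R).take (o : ℕ)) + (t + 1) - 1
        = sumlen ((List.ofFn R).take (o : ℕ)) + t := by omega
    rw [Nat.add_sub_cancel, harith, this]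
    simp
end

section
/- Let h ≥ 0 and let S be a string over the alphabet of bit-vectors of length h. Define the wavelet tree access procedure acc by: acc(0, S, i) = the empty bit-vector; acc(h+1, S, i) = b :: acc(h, map tail (filter (fun x => head x = b) S), rank_b(B, i)), where B = map head S and b = B[i]. Then for every position i < |S|, acc(h, S, i) = S[i]. That is, the full multi-level wavelet tree descent correctly answers access queries. -/
/-- The wavelet tree access procedure on a string of bit-vectors (lists of
Booleans) of length `h`: `acc 0 S i = []`, and
`acc (h+1) S i = b :: acc h (map tail (filter (head · = b) S)) (rank_b B i)`
where `B = map head S` and `b = B[i]`. -/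
def wtAcc : ℕ → List (List Bool) → ℕ → List Bool
  | 0, _, _ => []
  | h + 1, S, i =>
      let B := S.map List.headI
      let b := B.getD i false
      b :: wtAcc h ((S.filter (fun x => x.headI == b)).map List.tail) (rank b B i)

theorem filter_getElem_aux {α : Type*} (p : α → Bool) (S : List α) (i : ℕ)
    (hi : i < S.length) (hp : p S[i] = true) :
    ∃ hj : (S.take i).countP p < (S.filter p).length,
      (S.filter p)[(S.take i).countP p] = S[i] := by
  induction S generalizing i with
  | nil => simp at hi
  | cons a S ih =>
    cases i with
    | zero =>
      simp only [List.getElem_cons_zero] at hp ⊢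
      refine ⟨by simp [List.filter_cons, hp], ?_⟩
      simp [List.filter_cons, hp]
    | succ n =>
      simp only [List.getElem_cons_succ] at hp ⊢
      obtain ⟨hj, hF⟩ := ih n (by simpa using hi) hp
      by_cases hpa : p a
      · refine ⟨?_, ?_⟩ <;>
          simp [List.take_succ_cons, List.countP_cons, List.filter_cons, hpa, hj, hF]
      · refine ⟨?_, ?_⟩ <;>
          simp [List.take_succ_cons, List.countP_cons, List.filter_cons, hpa, hj, hF]

/-- The full multi-level wavelet tree descent correctly answers access
queries: if every symbol of `S` is a bit-vector of length `h`, then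
`acc h S i = S[i]` for every `i < |S|`. -/
theorem stmt15 (h : ℕ) (S : List (List Bool))
    (hlen : ∀ x ∈ S, x.length = h) (i : ℕ) (hi : i < S.length) :
    wtAcc h S i = S[i] := by
  induction h generalizing S i with
  | zero =>
    have := hlen S[i] (List.getElem_mem hi)
    simp [wtAcc, List.length_eq_zero_iff.mp this]
  | succ h ih =>
    have hSi : S[i].length = h + 1 := hlen S[i] (List.getElem_mem hi)
    simp only [wtAcc]
    set b : Bool := ((S.map List.headI).getD i false) with hb
    have hbi : b = S[i].headI := by
      rw [hb, List.getD_eq_getElem _ _ (by simpa using hi)]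
      simp
    have hp : (fun x : List Bool => x.headI == b) S[i] = true := by
      simp [hbi]
    obtain ⟨hj, hFj⟩ := filter_getElem_aux (fun x => x.headI == b) S i hi hp
    have hrank : rank b (S.map List.headI) i =
        (S.take i).countP (fun x => x.headI == b) := by
      simp [rank, List.count, ← List.map_take, List.countP_map, Function.comp_def]
    rw [hrank]
    set j := (S.take i).countP (fun x => x.headI == b)
    have hmem : ∀ x ∈ (S.filter (fun x => x.headI == b)).map List.tail,
        x.length = h := by
      intro x hx
      obtain ⟨y, hy, rfl⟩ := List.mem_map.mp hx
      have := hlen y (List.mem_of_mem_filter hy)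
      simp [List.length_tail, this]
    have hjlt : j < ((S.filter (fun x => x.headI == b)).map List.tail).length := by
      simpa using hj
    rw [ih _ hmem j hjlt]
    rw [List.getElem_map, hFj]
    rw [hbi]
    cases hS : S[i] with
    | nil => rw [hS] at hSi; simp at hSi
    | cons a l => simp
end

section
/- Let h ≥ 0 and let S be a string over the alphabet of bit-vectors of length h. Define the wavelet tree rank procedure R by: R(0, S, a, i) = i; R(h+1, S, a, i) = R(h, map tail (filter (fun x => head x = head a) S), tail a, rank_{head a}(map head S, i)). Then for every symbol a (a bit-vector of length h) and every 0 ≤ i ≤ |S|, R(h, S, a, i) = rank_a(S, i). That is, the full multi-level wavelet tree descent correctly answers rank queries. -/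
/-- The wavelet tree rank procedure on a string of bit-vectors (lists of
Booleans) of length `h`: `R 0 S a i = i`, and
`R (h+1) S a i = R h (map tail (filter (head · = head a) S)) (tail a)
(rank_{head a} (map head S) i)`. -/
def wtRank : ℕ → List (List Bool) → List Bool → ℕ → ℕ
  | 0, _, _, i => i
  | h + 1, S, a, i =>
      wtRank h ((S.filter (fun x => x.headI == a.headI)).map List.tail) a.tail
        (rank a.headI (S.map List.headI) i)

/-- The full multi-level wavelet tree descent correctly answers rank queries:
if every symbol of `S` and the query symbol `a` are bit-vectors of length `h`,
then `R h S a i = rank_a(S, i)` for every `0 ≤ i ≤ |S|`. -/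
theorem stmt16 (h : ℕ) (S : List (List Bool)) (a : List Bool)
    (hlen : ∀ x ∈ S, x.length = h) (ha : a.length = h)
    (i : ℕ) (hi : i ≤ S.length) :
    wtRank h S a i = rank a S i := by
  induction h generalizing S a i with
  | zero =>
    have ha0 : a = [] := List.length_eq_zero_iff.mp ha
    subst ha0
    have hT : S.take i = List.replicate i ([] : List Bool) := by
      apply List.eq_replicate_iff.mpr
      constructor
      · simp [min_eq_left hi]
      · intro b hb
        exact List.length_eq_zero_iff.mp (hlen b (List.mem_of_mem_take hb))
    simp only [wtRank, rank, hT, List.count_replicate_self]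
  | succ h ih =>
    set p : List Bool → Bool := fun x => x.headI == a.headI with hp
    set T := S.take i with hT
    have hj : rank a.headI (S.map List.headI) i = (T.filter p).length := by
      simp only [rank, ← List.map_take, ← hT, List.count_eq_countP, List.countP_map,
        ← List.countP_eq_length_filter]
      apply List.countP_congr
      intro x _
      simp [hp]
    have hpre : T.filter p <+: S.filter p := (List.take_prefix i S).filter p
    have htake : (S.filter p).take (T.filter p).length = T.filter p :=
      (List.prefix_iff_eq_take.mp hpre).symm
    rw [wtRank, hj]
    rw [ih _ _ ?_ ?_ _ ?_]
    · rw [← hp]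
      simp only [rank, ← List.map_take, htake, ← hT]
      simp only [List.count_eq_countP, List.countP_map, List.countP_filter]
      apply List.countP_congr
      intro x hx
      have hxl : x.length = h + 1 := hlen x (List.mem_of_mem_take hx)
      obtain ⟨y, ys, rfl⟩ : ∃ y ys, x = y :: ys := by
        cases x with
        | nil => simp at hxl
        | cons y ys => exact ⟨y, ys, rfl⟩
      obtain ⟨b, bs, rfl⟩ : ∃ b bs, a = b :: bs := by
        cases a with
        | nil => simp at ha
        | cons b bs => exact ⟨b, bs, rfl⟩
      simp only [hp, List.tail_cons, List.headI]
      cases y <;> cases b <;> simp [and_comm]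
    · intro x hx
      simp only [List.mem_map] at hx
      obtain ⟨y, hy, rfl⟩ := hx
      have := hlen y (List.mem_of_mem_filter hy)
      simp [List.length_tail, this]
    · simp [List.length_tail, ha]
    · rw [List.length_map]
      exact hpre.length_le
end
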